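/- Let n ≥ 1, α ∈ (0, n), and let ψ : [0,∞) → [0,∞) be non-decreasing and left-continuous. Then there exist constants C₃ = C₃(α,n) > 0 and C₄ = C₄(α,n) > 0 such that for every nonnegative, radially decreasing f ∈ L¹_loc(ℝⁿ) satisfying |{x : |f(x)| > t}| < ∞ for all t > 0 and for every t > 0, one has C₃ ∫_t^∞ s^{α/n − 1} ψ(C₄ s^{α/n} f**(s)) ds ≤ (W_{α,ψ} f)*(t). -/

import Mathlib

open MeasureTheory Set ENNReal

noncomputable section

/-- The decreasing rearrangement `f*` of a measurable function `f : ℝⁿ → ℝ`: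
`f*(t) = sup {s ≥ 0 : |{x : |f(x)| > s}| > t}` (with `sup ∅ = 0`). -/
def rearr {n : ℕ} (f : EuclideanSpace ℝ (Fin n) → ℝ) (t : ℝ) : ℝ :=
  sSup {s : ℝ | 0 ≤ s ∧ ENNReal.ofReal t < volume {x | s < |f x|}}

/-- The maximal rearrangement `f**(t) = (1/t) ∫₀ᵗ f*(s) ds` for `t > 0`, `f**(0) = f*(0)`. -/
def maxRearr {n : ℕ} (f : EuclideanSpace ℝ (Fin n) → ℝ) (t : ℝ) : ℝ :=
  if t = 0 then rearr f 0
  else (∫⁻ s in Ioc (0 : ℝ) t, ENNReal.ofReal (rearr f s)).toReal / t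

/-- The generalized Wolff potential
`W_{α,ψ} f(x) = ∫₀^∞ r^{α−1} ψ(r^{α−n} ∫_{B(x,r)} |f(y)| dy) dr`. -/
def wolffE {n : ℕ} (α : ℝ) (ψ : ℝ → ℝ) (f : EuclideanSpace ℝ (Fin n) → ℝ)
    (x : EuclideanSpace ℝ (Fin n)) : ℝ≥0∞ :=
  ∫⁻ r in Ioi (0 : ℝ),
    ENNReal.ofReal (r ^ (α - 1) * ψ (r ^ (α - n) * ∫ y in Metric.ball x r, |f y|))

/-- Decreasing rearrangement of an `ℝ≥0∞`-valued function. -/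
def rearrE {n : ℕ} (u : EuclideanSpace ℝ (Fin n) → ℝ≥0∞) (t : ℝ) : ℝ≥0∞ :=
  sSup {s : ℝ≥0∞ | ENNReal.ofReal t < volume {x | s < u x}}



lemma myNontrivial (n : ℕ) (hn : 1 ≤ n) : Nontrivial (EuclideanSpace ℝ (Fin n)) :=
  Module.nontrivial_of_finrank_pos (R := ℝ) (by simp only [finrank_euclideanSpace_fin]; omega)

lemma my_lintegral_image {s : Set ℝ} {φ φ' : ℝ → ℝ}
    (hs : MeasurableSet s) (hφ : ∀ x ∈ s, HasDerivWithinAt φ (φ' x) s x)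
    (hinj : InjOn φ s) (g : ℝ → ℝ≥0∞) :
    ∫⁻ x in φ '' s, g x = ∫⁻ x in s, ENNReal.ofReal |φ' x| * g (φ x) := by
  simpa only [ContinuousLinearMap.det_toSpanSingleton] using
    MeasureTheory.lintegral_image_eq_lintegral_abs_det_fderiv_mul volume hs
      (fun x hx => (hφ x hx).hasFDerivWithinAt) hinj g

lemma radial_level {n : ℕ} {h : ℝ → ℝ} {f : EuclideanSpace ℝ (Fin n) → ℝ}
    (hanti : AntitoneOn h (Ici 0)) (hh0 : ∀ r ∈ Ici (0:ℝ), 0 ≤ h r)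
    (hf : ∀ x, f x = h ‖x‖) (lam : ℝ) :
    {x : EuclideanSpace ℝ (Fin n) | lam < |f x|} = univ ∨
      ∃ R : ℝ, 0 ≤ R ∧ Metric.ball (0:EuclideanSpace ℝ (Fin n)) R ⊆ {x | lam < |f x|} ∧
        {x : EuclideanSpace ℝ (Fin n) | lam < |f x|} ⊆ Metric.closedBall (0:EuclideanSpace ℝ (Fin n)) R := by
  have habs : ∀ x : EuclideanSpace ℝ (Fin n), |f x| = h ‖x‖ := fun x => by
    rw [hf x, abs_of_nonneg (hh0 _ (norm_nonneg x))]
  set T : Set ℝ := {ρ : ℝ | 0 ≤ ρ ∧ lam < h ρ} with hT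
  by_cases hbdd : BddAbove T
  · by_cases hne : T.Nonempty
    · right
      refine ⟨sSup T, ?_, ?_, ?_⟩
      · obtain ⟨ρ₀, hρ₀⟩ := hne
        exact hρ₀.1.trans (le_csSup hbdd hρ₀)
      · intro x hx
        simp only [Metric.mem_ball, dist_zero_right] at hx
        obtain ⟨ρ, hρT, hlt⟩ := exists_lt_of_lt_csSup hne hx
        have hle : h ρ ≤ h ‖x‖ := hanti (norm_nonneg x) hρT.1 hlt.le
        exact mem_setOf.mpr ((habs x) ▸ lt_of_lt_of_le hρT.2 hle)
      · intro x hx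
        have hmem : ‖x‖ ∈ T := ⟨norm_nonneg x, (habs x) ▸ hx⟩
        simpa [Metric.mem_closedBall, dist_zero_right] using le_csSup hbdd hmem
    · right
      refine ⟨0, le_refl 0, by simp [Metric.ball_zero], ?_⟩
      intro x hx
      rw [Set.not_nonempty_iff_eq_empty] at hne
      have : ‖x‖ ∈ T := ⟨norm_nonneg x, (habs x) ▸ hx⟩
      rw [hne] at this
      exact absurd this (notMem_empty _)
  · left
    ext x
    simp only [mem_univ, iff_true, mem_setOf_eq]
    obtain ⟨ρ, hρT, hlt⟩ := not_bddAbove_iff.mp hbdd ‖x‖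
    rw [habs x]
    exact lt_of_lt_of_le hρT.2 (hanti (norm_nonneg x) hρT.1 hlt.le)

lemma radial_min_vol {n : ℕ} (hn : 1 ≤ n) {h : ℝ → ℝ} {f : EuclideanSpace ℝ (Fin n) → ℝ}
    (hanti : AntitoneOn h (Ici 0)) (hh0 : ∀ r ∈ Ici (0:ℝ), 0 ≤ h r)
    (hf : ∀ x, f x = h ‖x‖) (ρ : ℝ) (lam : ℝ) :
    min (volume (Metric.ball (0:EuclideanSpace ℝ (Fin n)) ρ))
        (volume {x : EuclideanSpace ℝ (Fin n) | lam < |f x|}) ≤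
      volume (Metric.ball (0:EuclideanSpace ℝ (Fin n)) ρ ∩ {x | lam < |f x|}) := by
  haveI : Nontrivial (EuclideanSpace ℝ (Fin n)) := myNontrivial n hn
  rcases radial_level hanti hh0 hf lam with hU | ⟨R, hR0, hball, hcb⟩
  · rw [hU, inter_univ]
    exact min_le_left _ _
  · have hvolS : volume {x : EuclideanSpace ℝ (Fin n) | lam < |f x|} =
        volume (Metric.ball (0:EuclideanSpace ℝ (Fin n)) R) := by
      refine le_antisymm ?_ (measure_mono hball)
      calc volume {x : EuclideanSpace ℝ (Fin n) | lam < |f x|}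
          ≤ volume (Metric.closedBall (0:EuclideanSpace ℝ (Fin n)) R) := measure_mono hcb
        _ = volume (Metric.ball (0:EuclideanSpace ℝ (Fin n)) R) :=
            Measure.addHaar_closedBall_eq_addHaar_ball volume _ _
    rcases le_total ρ R with hle | hle
    · calc min (volume (Metric.ball (0:EuclideanSpace ℝ (Fin n)) ρ)) _
          ≤ volume (Metric.ball (0:EuclideanSpace ℝ (Fin n)) ρ) := min_le_left _ _
        _ ≤ _ := measure_mono (subset_inter (subset_refl _)
              ((Metric.ball_subset_ball hle).trans hball))
    · calc min _ (volume {x : EuclideanSpace ℝ (Fin n) | lam < |f x|})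
          ≤ volume {x : EuclideanSpace ℝ (Fin n) | lam < |f x|} := min_le_right _ _
        _ = volume (Metric.ball (0:EuclideanSpace ℝ (Fin n)) R) := hvolS
        _ ≤ _ := measure_mono (subset_inter (Metric.ball_subset_ball hle) hball)

lemma rearr_lintegral_le {n : ℕ} (hn : 1 ≤ n) {h : ℝ → ℝ} {f : EuclideanSpace ℝ (Fin n) → ℝ}
    (hanti : AntitoneOn h (Ici 0)) (hh0 : ∀ r ∈ Ici (0:ℝ), 0 ≤ h r)
    (hf : ∀ x, f x = h ‖x‖)
    (hfm : AEMeasurable f (volume : Measure (EuclideanSpace ℝ (Fin n))))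
    {ρ : ℝ} (hρ : 0 < ρ) :
    ∫⁻ s in Ioc (0:ℝ) ((volume (Metric.ball (0:EuclideanSpace ℝ (Fin n)) ρ)).toReal),
        ENNReal.ofReal (rearr f s) ≤
      ∫⁻ x in Metric.ball (0:EuclideanSpace ℝ (Fin n)) ρ, ENNReal.ofReal |f x| := by
  set d : ℝ → ℝ≥0∞ := fun lam => volume {x : EuclideanSpace ℝ (Fin n) | lam < |f x|} with hd
  have hd_anti : Antitone d := fun a b hab =>
    measure_mono (fun x hx => lt_of_le_of_lt hab hx)
  have hd_meas : Measurable d := hd_anti.measurable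
  set μR : ℝ := (volume (Metric.ball (0:EuclideanSpace ℝ (Fin n)) ρ)).toReal with hμR
  have hμfin : volume (Metric.ball (0:EuclideanSpace ℝ (Fin n)) ρ) ≠ ⊤ := measure_ball_lt_top.ne
  have hofμ : ENNReal.ofReal μR = volume (Metric.ball (0:EuclideanSpace ℝ (Fin n)) ρ) :=
    ENNReal.ofReal_toReal hμfin
  set E' : Set (ℝ × ℝ) := {p | ENNReal.ofReal p.1 < d p.2} with hE'def
  have hE' : MeasurableSet E' :=
    measurableSet_lt (ENNReal.measurable_ofReal.comp measurable_fst) (hd_meas.comp measurable_snd)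
  have hBmeas : ∀ s : ℝ, MeasurableSet {lam : ℝ | ENNReal.ofReal s < d lam} := fun s =>
    hd_meas measurableSet_Ioi
  have hCmeas : ∀ lam : ℝ, MeasurableSet {s : ℝ | ENNReal.ofReal s < d lam} := fun lam =>
    ENNReal.measurable_ofReal measurableSet_Iio
  have step1 : ∀ s : ℝ, ENNReal.ofReal (rearr f s) ≤
      (volume.restrict (Ioi (0:ℝ))) (Prod.mk s ⁻¹' E') := by
    intro s
    have hpre : Prod.mk s ⁻¹' E' = {lam : ℝ | ENNReal.ofReal s < d lam} := rfl
    rw [hpre, Measure.restrict_apply (hBmeas s)]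
    have hsub : Ioo (0:ℝ) (rearr f s) ⊆ {lam | ENNReal.ofReal s < d lam} ∩ Ioi 0 := by
      rintro lam ⟨hl0, hl⟩
      refine ⟨?_, hl0⟩
      set S := {a : ℝ | 0 ≤ a ∧ ENNReal.ofReal s < volume {x : EuclideanSpace ℝ (Fin n) | a < |f x|}}
        with hS
      have hrw : rearr f s = sSup S := rfl
      rw [hrw] at hl
      have hne : S.Nonempty := by
        by_contra hcon
        rw [Set.not_nonempty_iff_eq_empty] at hcon
        rw [hcon, Real.sSup_empty] at hl
        linarith
      have hbdd : BddAbove S := by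
        by_contra hcon
        rw [Real.sSup_of_not_bddAbove hcon] at hl
        linarith
      obtain ⟨b, hbS, hlb⟩ := exists_lt_of_lt_csSup hne hl
      exact lt_of_lt_of_le hbS.2 (hd_anti hlb.le)
    calc ENNReal.ofReal (rearr f s) = volume (Ioo (0:ℝ) (rearr f s)) := by
          rw [Real.volume_Ioo, sub_zero]
      _ ≤ _ := measure_mono hsub
  calc ∫⁻ s in Ioc (0:ℝ) μR, ENNReal.ofReal (rearr f s)
      ≤ ∫⁻ s in Ioc (0:ℝ) μR, (volume.restrict (Ioi (0:ℝ))) (Prod.mk s ⁻¹' E') :=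
        lintegral_mono fun s => step1 s
    _ = ((volume.restrict (Ioc (0:ℝ) μR)).prod (volume.restrict (Ioi (0:ℝ)))) E' :=
        (Measure.prod_apply hE').symm
    _ = ∫⁻ lam in Ioi (0:ℝ), (volume.restrict (Ioc (0:ℝ) μR)) ((fun s => (s, lam)) ⁻¹' E') :=
        Measure.prod_apply_symm hE'
    _ ≤ ∫⁻ lam in Ioi (0:ℝ),
          volume (Metric.ball (0:EuclideanSpace ℝ (Fin n)) ρ ∩ {x | lam < |f x|}) := by
        refine lintegral_mono fun lam => ?_
        have hpre : (fun s => (s, lam)) ⁻¹' E' = {s : ℝ | ENNReal.ofReal s < d lam} := rfl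
        rw [hpre, Measure.restrict_apply (hCmeas lam)]
        refine le_trans ?_ (radial_min_vol hn hanti hh0 hf ρ lam)
        rw [← hofμ]
        refine le_min ?_ ?_
        · refine le_trans (measure_mono inter_subset_right) ?_
          rw [Real.volume_Ioc, sub_zero]
        · by_cases htop : d lam = ⊤
          · exact (le_top (a := volume ({s : ℝ | ENNReal.ofReal s < d lam} ∩ Ioc 0 μR))).trans_eq
              htop.symm
          · have hsub2 : {s : ℝ | ENNReal.ofReal s < d lam} ∩ Ioc 0 μR ⊆
                Ioc 0 ((d lam).toReal) := by
              rintro s ⟨hs1, hs2⟩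
              refine ⟨hs2.1, ?_⟩
              rw [← ENNReal.ofReal_toReal htop] at hs1
              exact le_of_lt ((ENNReal.ofReal_lt_ofReal_iff_of_nonneg hs2.1.le).mp hs1)
            refine le_trans (measure_mono hsub2) ?_
            rw [Real.volume_Ioc, sub_zero]
            exact ENNReal.ofReal_toReal_le
    _ = ∫⁻ lam in Ioi (0:ℝ),
          (volume.restrict (Metric.ball (0:EuclideanSpace ℝ (Fin n)) ρ)) {x | lam < |f x|} := by
        refine lintegral_congr fun lam => ?_
        rw [Measure.restrict_apply' measurableSet_ball, inter_comm]
    _ = ∫⁻ x in Metric.ball (0:EuclideanSpace ℝ (Fin n)) ρ, ENNReal.ofReal |f x| :=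
        (lintegral_eq_lintegral_meas_lt _ (ae_of_all _ fun y => abs_nonneg (f y))
          ((measurable_abs (α := ℝ)).comp_aemeasurable hfm.restrict)).symm

lemma maxRearr_mul_le {n : ℕ} (hn : 1 ≤ n) {h : ℝ → ℝ} {f : EuclideanSpace ℝ (Fin n) → ℝ}
    (hanti : AntitoneOn h (Ici 0)) (hh0 : ∀ r ∈ Ici (0:ℝ), 0 ≤ h r)
    (hf : ∀ x, f x = h ‖x‖) (hloc : LocallyIntegrable f) {ρ : ℝ} (hρ : 0 < ρ) :
    (volume (Metric.ball (0:EuclideanSpace ℝ (Fin n)) ρ)).toReal *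
        maxRearr f ((volume (Metric.ball (0:EuclideanSpace ℝ (Fin n)) ρ)).toReal) ≤
      ∫ y in Metric.ball (0:EuclideanSpace ℝ (Fin n)) ρ, |f y| := by
  set μR : ℝ := (volume (Metric.ball (0:EuclideanSpace ℝ (Fin n)) ρ)).toReal with hμR
  have hμfin : volume (Metric.ball (0:EuclideanSpace ℝ (Fin n)) ρ) ≠ ⊤ := measure_ball_lt_top.ne
  have hμpos : 0 < μR := ENNReal.toReal_pos (Metric.measure_ball_pos volume 0 hρ).ne' hμfin
  have hint : IntegrableOn f (Metric.ball (0:EuclideanSpace ℝ (Fin n)) ρ) :=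
    (hloc.integrableOn_isCompact (isCompact_closedBall 0 ρ)).mono_set
      Metric.ball_subset_closedBall
  have habs : IntegrableOn (fun y => |f y|) (Metric.ball (0:EuclideanSpace ℝ (Fin n)) ρ) :=
    hint.abs
  have hlint_fin : (∫⁻ y in Metric.ball (0:EuclideanSpace ℝ (Fin n)) ρ,
      ENNReal.ofReal |f y|) ≠ ⊤ := by
    have := (hasFiniteIntegral_iff_ofReal (ae_of_all _ fun y => abs_nonneg (f y))).mp
      habs.hasFiniteIntegral
    exact this.ne
  have hlint_eq : ∫ y in Metric.ball (0:EuclideanSpace ℝ (Fin n)) ρ, |f y| =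
      (∫⁻ y in Metric.ball (0:EuclideanSpace ℝ (Fin n)) ρ, ENNReal.ofReal |f y|).toReal :=
    integral_eq_lintegral_of_nonneg_ae (ae_of_all _ fun y => abs_nonneg (f y))
      habs.aestronglyMeasurable
  have hkey := rearr_lintegral_le hn hanti hh0 hf hloc.aestronglyMeasurable.aemeasurable hρ
  rw [maxRearr, if_neg hμpos.ne']
  rw [mul_comm, div_mul_cancel₀ _ hμpos.ne', hlint_eq]
  exact ENNReal.toReal_mono hlint_fin hkey

/-- sharp rearrangement lower estimate for the generalized Wolff potential
of a nonnegative radially decreasing function. -/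
theorem statement1 (n : ℕ) (hn : 1 ≤ n) (α : ℝ) (hα : α ∈ Ioo (0 : ℝ) n)
    (ψ : ℝ → ℝ) (hψmono : MonotoneOn ψ (Ici 0))
    (hψnonneg : ∀ s ∈ Ici (0 : ℝ), 0 ≤ ψ s)
    (hψlc : ∀ s : ℝ, 0 < s → ContinuousWithinAt ψ (Iio s) s) :
    ∃ C₃ : ℝ, 0 < C₃ ∧ ∃ C₄ : ℝ, 0 < C₄ ∧
      ∀ f : EuclideanSpace ℝ (Fin n) → ℝ, LocallyIntegrable f →
        (∀ t : ℝ, 0 < t → volume {x | t < |f x|} < ⊤) →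
        (∃ h : ℝ → ℝ, AntitoneOn h (Ici 0) ∧ (∀ r ∈ Ici (0 : ℝ), 0 ≤ h r) ∧
          ∀ x, f x = h ‖x‖) →
        ∀ t : ℝ, 0 < t →
          ENNReal.ofReal C₃ *
              (∫⁻ s in Ioi t,
                ENNReal.ofReal (s ^ (α / n - 1) * ψ (C₄ * s ^ (α / n) * maxRearr f s))) ≤
            rearrE (wolffE α ψ f) t := by
  obtain ⟨hα0, hαn⟩ := hα
  have hnne : n ≠ 0 := by omega
  have hnpos : (0:ℝ) < n := by exact_mod_cast Nat.pos_of_ne_zero hnne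
  haveI : Nontrivial (EuclideanSpace ℝ (Fin n)) := myNontrivial n hn
  set ω : ℝ := (volume (Metric.ball (0:EuclideanSpace ℝ (Fin n)) 1)).toReal with hω
  have hωpos : 0 < ω :=
    ENNReal.toReal_pos (Metric.measure_ball_pos volume 0 one_pos).ne' measure_ball_lt_top.ne
  set c : ℝ := ω / 3 ^ n with hc
  have hcpos : 0 < c := by positivity
  refine ⟨((n : ℝ) * c ^ (α / n))⁻¹, by positivity, c ^ (1 - α / n), by positivity, ?_⟩
  intro f hloc hfinvol hrad t ht
  obtain ⟨h, hanti, hh0, hfh⟩ := hrad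
  set C₃ : ℝ := ((n : ℝ) * c ^ (α / n))⁻¹ with hC₃
  set C₄ : ℝ := c ^ (1 - α / n) with hC₄
  set g : ℝ → ℝ≥0∞ := fun s =>
    ENNReal.ofReal (s ^ (α / n - 1) * ψ (C₄ * s ^ (α / n) * maxRearr f s)) with hg
  -- volume of balls
  have hvol_ball : ∀ r : ℝ, 0 ≤ r →
      volume (Metric.ball (0:EuclideanSpace ℝ (Fin n)) r) =
        ENNReal.ofReal (r ^ n) * volume (Metric.ball (0:EuclideanSpace ℝ (Fin n)) 1) := by
    intro r hr
    rw [Measure.addHaar_ball volume 0 hr, finrank_euclideanSpace_fin]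
  have hμr : ∀ r : ℝ, 0 < r →
      (volume (Metric.ball (0:EuclideanSpace ℝ (Fin n)) (r / 3))).toReal = c * r ^ n := by
    intro r hr
    rw [hvol_ball _ (by positivity), ENNReal.toReal_mul,
      ENNReal.toReal_ofReal (by positivity), ← hω, div_pow, hc]
    ring
  -- core estimate
  have hcore : ∀ x : EuclideanSpace ℝ (Fin n),
      ENNReal.ofReal C₃ * (∫⁻ s in Ioi (c * ((3/2) * ‖x‖) ^ n), g s) ≤ wolffE α ψ f x := by
    intro x
    set m : ℝ := (3/2) * ‖x‖ with hm
    have hm0 : 0 ≤ m := by positivity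
    have himg : (fun r : ℝ => c * r ^ n) '' Ioi m = Ioi (c * m ^ n) := by
      apply Subset.antisymm
      · rintro _ ⟨r, hr, rfl⟩
        exact mul_lt_mul_of_pos_left (pow_lt_pow_left₀ hr hm0 hnne) hcpos
      · intro u hu
        rw [mem_Ioi] at hu
        have hu0 : 0 ≤ u := le_of_lt (lt_of_le_of_lt (by positivity) hu)
        have hmn_lt : m ^ n < u / c := (lt_div_iff₀ hcpos).mpr (by linarith [mul_comm c (m ^ n)])
        refine ⟨(u / c) ^ ((n:ℝ)⁻¹), ?_, ?_⟩
        · have h1 : m = (m ^ n) ^ ((n:ℝ)⁻¹) := (Real.pow_rpow_inv_natCast hm0 hnne).symm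
          rw [mem_Ioi]
          calc m = (m ^ n) ^ ((n:ℝ)⁻¹) := h1
            _ < (u / c) ^ ((n:ℝ)⁻¹) :=
              Real.rpow_lt_rpow (pow_nonneg hm0 n) hmn_lt (by positivity)
        · show c * ((u / c) ^ ((n:ℝ)⁻¹)) ^ n = u
          rw [Real.rpow_inv_natCast_pow (div_nonneg hu0 hcpos.le) hnne]
          field_simp
    have hderiv : ∀ r ∈ Ioi m, HasDerivWithinAt (fun r : ℝ => c * r ^ n)
        (c * (n * r ^ (n - 1))) (Ioi m) r := fun r _ =>
      ((hasDerivAt_pow n r).const_mul c).hasDerivWithinAt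
    have hinj : InjOn (fun r : ℝ => c * r ^ n) (Ioi m) := by
      have hsm : StrictMonoOn (fun r : ℝ => c * r ^ n) (Ioi m) := fun a ha b hb hab =>
        mul_lt_mul_of_pos_left (pow_lt_pow_left₀ hab (hm0.trans (le_of_lt ha)) hnne) hcpos
      exact hsm.injOn
    have hchg : ∫⁻ s in Ioi (c * m ^ n), g s =
        ∫⁻ r in Ioi m, ENNReal.ofReal |c * (n * r ^ (n - 1))| * g (c * r ^ n) := by
      rw [← himg]
      exact my_lintegral_image measurableSet_Ioi hderiv hinj g
    have hpt : ∀ r ∈ Ioi m, ENNReal.ofReal |c * (n * r ^ (n - 1))| * g (c * r ^ n) ≤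
        ENNReal.ofReal ((n : ℝ) * c ^ (α / n)) *
          ENNReal.ofReal (r ^ (α - 1) * ψ (r ^ (α - n) * ∫ y in Metric.ball x r, |f y|)) := by
      intro r hr
      rw [mem_Ioi] at hr
      have hr0 : 0 < r := lt_of_le_of_lt hm0 hr
      set u : ℝ := c * r ^ n with hu
      have hupos : 0 < u := by positivity
      set M : ℝ := maxRearr f u with hM
      have hM0 : 0 ≤ M := by
        rw [hM, maxRearr, if_neg hupos.ne']
        exact div_nonneg ENNReal.toReal_nonneg hupos.le
      -- integral comparison
      have hI1 : u * M ≤ ∫ y in Metric.ball (0:EuclideanSpace ℝ (Fin n)) (r / 3), |f y| := by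
        have := maxRearr_mul_le hn hanti hh0 hfh hloc (show (0:ℝ) < r / 3 by positivity)
        rwa [hμr r hr0] at this
      have hintxr : IntegrableOn (fun y => |f y|) (Metric.ball x r) :=
        ((hloc.integrableOn_isCompact (isCompact_closedBall x r)).mono_set
          Metric.ball_subset_closedBall).abs
      have hsub : Metric.ball (0:EuclideanSpace ℝ (Fin n)) (r / 3) ⊆ Metric.ball x r := by
        intro y hy
        rw [Metric.mem_ball] at hy ⊢
        rw [dist_zero_right] at hy
        have h1 : dist y x ≤ ‖y‖ + ‖x‖ := by
          calc dist y x ≤ dist y 0 + dist 0 x := dist_triangle y 0 x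
            _ = ‖y‖ + ‖x‖ := by rw [dist_zero_right, dist_zero_left]
        have h2 : (3/2) * ‖x‖ < r := hr
        linarith
      have hI2 : ∫ y in Metric.ball (0:EuclideanSpace ℝ (Fin n)) (r / 3), |f y| ≤
          ∫ y in Metric.ball x r, |f y| :=
        setIntegral_mono_set hintxr (ae_of_all _ fun y => abs_nonneg (f y))
          (HasSubset.Subset.eventuallyLE hsub)
      have hIball : 0 ≤ ∫ y in Metric.ball x r, |f y| :=
        setIntegral_nonneg measurableSet_ball fun y _ => abs_nonneg (f y)
      have hrpow_pos : (0:ℝ) < r ^ (α - (n:ℝ)) := Real.rpow_pos_of_pos hr0 _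
      have hrr : r ^ (α - (n:ℝ)) * r ^ ((n:ℕ):ℝ) = r ^ α := by
        rw [← Real.rpow_add hr0]
        norm_num
      have harg : c * r ^ α * M ≤ r ^ (α - (n:ℝ)) * ∫ y in Metric.ball x r, |f y| := by
        have hkey : c * r ^ α = r ^ (α - (n:ℝ)) * u := by
          rw [hu, show ((r:ℝ) ^ (n:ℕ) = r ^ ((n:ℕ):ℝ)) from (Real.rpow_natCast r n).symm,
            ← hrr]
          ring
        rw [hkey, mul_assoc]
        exact mul_le_mul_of_nonneg_left (hI1.trans hI2) hrpow_pos.le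
      have hψle : ψ (c * r ^ α * M) ≤ ψ (r ^ (α - (n:ℝ)) * ∫ y in Metric.ball x r, |f y|) := by
        have hmem1 : c * r ^ α * M ∈ Ici (0:ℝ) := by
          have : (0:ℝ) < r ^ α := Real.rpow_pos_of_pos hr0 _
          exact mul_nonneg (mul_nonneg hcpos.le this.le) hM0
        have hmem2 : r ^ (α - (n:ℝ)) * (∫ y in Metric.ball x r, |f y|) ∈ Ici (0:ℝ) :=
          mul_nonneg hrpow_pos.le hIball
        exact hψmono hmem1 hmem2 harg
      -- algebra
      have habs' : |c * ((n:ℝ) * r ^ (n - 1))| = c * ((n:ℝ) * r ^ (n - 1)) := by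
        rw [abs_of_nonneg]; positivity
      have e3 : ((n:ℝ)) * (α / (n:ℝ)) = α := by field_simp
      have e4 : ((n:ℝ)) * (α / (n:ℝ) - 1) = α - (n:ℝ) := by field_simp
      have key1 : u ^ (α / (n:ℝ) - 1) = c ^ (α / (n:ℝ) - 1) * r ^ (α - (n:ℝ)) := by
        rw [hu, show ((r:ℝ) ^ (n:ℕ) = r ^ ((n:ℕ):ℝ)) from (Real.rpow_natCast r n).symm,
          Real.mul_rpow hcpos.le (Real.rpow_nonneg hr0.le _), ← Real.rpow_mul hr0.le, e4]
      have key2 : C₄ * u ^ (α / (n:ℝ)) = c * r ^ α := by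
        rw [hC₄, hu, show ((r:ℝ) ^ (n:ℕ) = r ^ ((n:ℕ):ℝ)) from (Real.rpow_natCast r n).symm,
          Real.mul_rpow hcpos.le (Real.rpow_nonneg hr0.le _), ← Real.rpow_mul hr0.le, e3,
          ← mul_assoc, ← Real.rpow_add hcpos,
          show (1 - α / (n:ℝ) + α / (n:ℝ)) = 1 by ring, Real.rpow_one]
      have hgu : g u = ENNReal.ofReal ((c ^ (α / n - 1) * r ^ (α - (n:ℝ))) *
          ψ (c * r ^ α * M)) := by
        simp only [hg]
        rw [key1, key2]
      rw [habs', hgu, ← ENNReal.ofReal_mul (by positivity), ← ENNReal.ofReal_mul (by positivity)]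
      apply ENNReal.ofReal_le_ofReal
      have hfac : c * ((n:ℝ) * r ^ (n - 1)) * (c ^ (α / n - 1) * r ^ (α - (n:ℝ))) =
          (n : ℝ) * c ^ (α / n) * r ^ (α - 1) := by
        have e1 : c * c ^ (α / n - 1) = c ^ (α / n) := by
          nth_rewrite 1 [show c = c ^ (1:ℝ) from (Real.rpow_one c).symm]
          rw [← Real.rpow_add hcpos]
          norm_num
        have e2 : (r:ℝ) ^ (n - 1 : ℕ) * r ^ (α - (n:ℝ)) = r ^ (α - 1) := by
          rw [show ((r:ℝ) ^ (n - 1 : ℕ) = r ^ (((n - 1 : ℕ)):ℝ)) from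
            (Real.rpow_natCast r (n-1)).symm, ← Real.rpow_add hr0]
          congr 1
          rw [Nat.cast_sub hn, Nat.cast_one]
          ring
        calc c * ((n:ℝ) * r ^ (n - 1)) * (c ^ (α / n - 1) * r ^ (α - (n:ℝ)))
            = (n:ℝ) * (c * c ^ (α / n - 1)) * (r ^ (n - 1 : ℕ) * r ^ (α - (n:ℝ))) := by ring
          _ = (n : ℝ) * c ^ (α / n) * r ^ (α - 1) := by rw [e1, e2]
      calc c * ((n:ℝ) * r ^ (n - 1)) * (c ^ (α / n - 1) * r ^ (α - (n:ℝ)) * ψ (c * r ^ α * M))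
          = ((n : ℝ) * c ^ (α / n) * r ^ (α - 1)) * ψ (c * r ^ α * M) := by
            rw [← hfac]; ring
        _ ≤ ((n : ℝ) * c ^ (α / n) * r ^ (α - 1)) *
              ψ (r ^ (α - (n:ℝ)) * ∫ y in Metric.ball x r, |f y|) := by
            apply mul_le_mul_of_nonneg_left hψle
            positivity
        _ = (n : ℝ) * c ^ (α / n) *
              (r ^ (α - 1) * ψ (r ^ (α - (n:ℝ)) * ∫ y in Metric.ball x r, |f y|)) := by ring
    -- assemble
    have hstep : ∫⁻ s in Ioi (c * m ^ n), g s ≤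
        ENNReal.ofReal ((n : ℝ) * c ^ (α / n)) * wolffE α ψ f x := by
      rw [hchg]
      calc ∫⁻ r in Ioi m, ENNReal.ofReal |c * (n * r ^ (n - 1))| * g (c * r ^ n)
          ≤ ∫⁻ r in Ioi m, ENNReal.ofReal ((n : ℝ) * c ^ (α / n)) *
              ENNReal.ofReal (r ^ (α - 1) *
                ψ (r ^ (α - n) * ∫ y in Metric.ball x r, |f y|)) := by
            refine lintegral_mono_ae ?_
            exact (ae_restrict_iff' measurableSet_Ioi).mpr (ae_of_all _ hpt)
        _ = ENNReal.ofReal ((n : ℝ) * c ^ (α / n)) * ∫⁻ r in Ioi m,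
              ENNReal.ofReal (r ^ (α - 1) *
                ψ (r ^ (α - n) * ∫ y in Metric.ball x r, |f y|)) :=
            lintegral_const_mul' _ _ ENNReal.ofReal_ne_top
        _ ≤ ENNReal.ofReal ((n : ℝ) * c ^ (α / n)) * wolffE α ψ f x := by
            apply mul_le_mul_right
            rw [wolffE]
            exact lintegral_mono' (Measure.restrict_mono (Ioi_subset_Ioi hm0) le_rfl) le_rfl
    calc ENNReal.ofReal C₃ * ∫⁻ s in Ioi (c * m ^ n), g s
        ≤ ENNReal.ofReal C₃ * (ENNReal.ofReal ((n : ℝ) * c ^ (α / n)) * wolffE α ψ f x) :=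
          mul_le_mul_right hstep _
      _ = (ENNReal.ofReal C₃ * ENNReal.ofReal ((n : ℝ) * c ^ (α / n))) * wolffE α ψ f x := by
          rw [mul_assoc]
      _ = wolffE α ψ f x := by
          rw [← ENNReal.ofReal_mul (by positivity), hC₃,
            inv_mul_cancel₀ (by positivity), ENNReal.ofReal_one, one_mul]
  -- the set of good points
  set ρ₀ : ℝ := (2/3) * (t / c) ^ ((n:ℝ)⁻¹) with hρ₀
  have hρ₀pos : 0 < ρ₀ := by
    have : 0 < (t / c) ^ ((n:ℝ)⁻¹) := Real.rpow_pos_of_pos (by positivity) _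
    positivity
  have hFW : ∀ x ∈ Metric.closedBall (0:EuclideanSpace ℝ (Fin n)) ρ₀,
      ENNReal.ofReal C₃ * (∫⁻ s in Ioi t, g s) ≤ wolffE α ψ f x := by
    intro x hx
    rw [Metric.mem_closedBall, dist_zero_right] at hx
    have hle : c * ((3/2) * ‖x‖) ^ n ≤ t := by
      have h1 : (3/2) * ‖x‖ ≤ (t / c) ^ ((n:ℝ)⁻¹) := by
        rw [hρ₀] at hx; linarith
      have h2 : ((3/2) * ‖x‖) ^ n ≤ ((t / c) ^ ((n:ℝ)⁻¹)) ^ n :=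
        pow_le_pow_left₀ (by positivity) h1 n
      rw [Real.rpow_inv_natCast_pow (by positivity) hnne] at h2
      calc c * ((3/2) * ‖x‖) ^ n ≤ c * (t / c) := by
            exact mul_le_mul_of_nonneg_left h2 hcpos.le
        _ = t := by field_simp
    refine le_trans ?_ (hcore x)
    apply mul_le_mul_right
    exact lintegral_mono' (Measure.restrict_mono (Ioi_subset_Ioi hle) le_rfl) le_rfl
  have hvolcb : volume (Metric.closedBall (0:EuclideanSpace ℝ (Fin n)) ρ₀) =
      ENNReal.ofReal (2 ^ n * t) := by
    rw [Measure.addHaar_closedBall_eq_addHaar_ball volume 0 ρ₀, hvol_ball ρ₀ hρ₀pos.le,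
      show volume (Metric.ball (0:EuclideanSpace ℝ (Fin n)) 1) = ENNReal.ofReal ω from
        (ENNReal.ofReal_toReal measure_ball_lt_top.ne).symm,
      ← ENNReal.ofReal_mul (by positivity)]
    congr 1
    rw [hρ₀, mul_pow, Real.rpow_inv_natCast_pow (by positivity) hnne, hc]
    field_simp
    ring_nf
    rw [← mul_pow]
    norm_num
  have hvolgt : ENNReal.ofReal t < volume (Metric.closedBall (0:EuclideanSpace ℝ (Fin n)) ρ₀) := by
    rw [hvolcb]
    apply (ENNReal.ofReal_lt_ofReal_iff (by positivity)).mpr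
    have h2n : (2:ℝ) ≤ 2 ^ n := by
      calc (2:ℝ) = 2 ^ 1 := (pow_one 2).symm
        _ ≤ 2 ^ n := pow_le_pow_right₀ one_le_two hn
    nlinarith
  -- conclusion
  by_contra hcon
  rw [not_le] at hcon
  obtain ⟨s, hs1, hs2⟩ := exists_between hcon
  have hsmem : s ∈ {s : ℝ≥0∞ | ENNReal.ofReal t < volume {x | s < wolffE α ψ f x}} := by
    refine lt_of_lt_of_le hvolgt (measure_mono ?_)
    intro x hx
    exact lt_of_lt_of_le hs2 (hFW x hx)
  exact absurd (le_sSup hsmem : s ≤ rearrE (wolffE α ψ f) t) (not_le.mpr hs1)
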